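/- arXiv:1311.6170 — 4 statements merged into one kernel-verified Lean document; each statement's English description precedes it below -/
import Mathlib

section
/- For all integers d, t ≥ 1 there exist constants r₀ = r₀(d,t) ∈ ℕ and C = C(d,t) > 0 with the following property. Let f : ℤ^t → ℝ be a polynomial of total degree at most d, let N₁,…,Nₜ ≥ 1 be integers, and let M ≥ 0. If ‖f‖_{C^∞_*[N⃗]} ≤ M, then there is an integer r with 1 ≤ r ≤ r₀ such that ‖r·f‖_{C^∞[N⃗]} ≤ C·M. -/
/-- `fracNorm x` is the distance from `x` to the nearest integer, `‖x‖_{ℝ/ℤ}`. -/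
noncomputable def fracNorm (x : ℝ) : ℝ := |x - round x|

/-- The generalized binomial coefficient `(n choose k)` for `n : ℤ`, as a real number. -/
noncomputable def intBinom (n : ℤ) (k : ℕ) : ℝ :=
  (∏ j ∈ Finset.range k, ((n : ℝ) - (j : ℝ))) / (Nat.factorial k : ℝ)

/-- The set `𝓘` of multi-indices `i : Fin t → ℕ` of total degree at most `d`. -/
def mIdx (t d : ℕ) : Finset (Fin t → ℕ) :=
  (Finset.Icc 0 (fun _ => d)).filter (fun i => ∑ j, i j ≤ d)

/-- Stirling numbers of the second kind. -/
def stir : ℕ → ℕ → ℕ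
  | 0, 0 => 1
  | 0, _ + 1 => 0
  | _ + 1, 0 => 0
  | k + 1, m + 1 => (m + 1) * stir k (m + 1) + stir k m

lemma stir_of_lt : ∀ {k m : ℕ}, k < m → stir k m = 0 := by
  intro k
  induction k with
  | zero => rintro (_ | m) h; · omega
            rfl
  | succ k ih =>
    rintro (_ | m) h
    · omega
    · show (m + 1) * stir k (m + 1) + stir k m = 0
      rw [ih (by omega), ih (by omega)]
      simp

noncomputable def ffact (x : ℝ) (m : ℕ) : ℝ := ∏ j ∈ Finset.range m, (x - (j : ℕ))

lemma ffact_succ (x : ℝ) (m : ℕ) : ffact x (m + 1) = ffact x m * (x - m) :=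
  Finset.prod_range_succ _ _

lemma pow_eq_sum_stir (k : ℕ) (x : ℝ) :
    x ^ k = ∑ m ∈ Finset.range (k + 1), (stir k m : ℝ) * ffact x m := by
  induction k with
  | zero => simp [ffact, stir]
  | succ k ih =>
    have h1 : x ^ (k + 1) = ∑ m ∈ Finset.range (k + 1),
        ((stir k m : ℝ) * ffact x (m + 1) + (m : ℝ) * (stir k m : ℝ) * ffact x m) := by
      rw [pow_succ, ih, Finset.sum_mul]
      refine Finset.sum_congr rfl fun m _ => ?_
      rw [ffact_succ]; ring
    rw [h1, Finset.sum_add_distrib]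
    have h2 : ∑ m ∈ Finset.range (k + 1), (m : ℝ) * (stir k m : ℝ) * ffact x m
        = ∑ m ∈ Finset.range (k + 1), ((m : ℝ) + 1) * (stir k (m + 1) : ℝ) * ffact x (m + 1) := by
      rw [Finset.sum_range_succ' (fun m => (m : ℝ) * (stir k m : ℝ) * ffact x m) k,
          Finset.sum_range_succ (fun m => ((m : ℝ) + 1) * (stir k (m + 1) : ℝ) * ffact x (m + 1)) k]
      rw [stir_of_lt (Nat.lt_succ_self k)]
      push_cast
      ring
    have h3 := Finset.sum_range_succ' (fun m => (stir (k + 1) m : ℝ) * ffact x m) (k + 1)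
    have h0 : stir (k + 1) 0 = 0 := rfl
    rw [h2, h3, h0]
    have h4 : ∀ m ∈ Finset.range (k + 1),
        (stir k m : ℝ) * ffact x (m + 1) + ((m : ℝ) + 1) * (stir k (m + 1) : ℝ) * ffact x (m + 1)
          = (stir (k + 1) (m + 1) : ℝ) * ffact x (m + 1) := by
      intro m _
      show _ = (((m + 1) * stir k (m + 1) + stir k m : ℕ) : ℝ) * ffact x (m + 1)
      push_cast
      ring
    rw [← Finset.sum_add_distrib, Finset.sum_congr rfl h4]
    simp

lemma ffact_eq (n : ℤ) (m : ℕ) :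
    ffact (n : ℝ) m = (Nat.factorial m : ℝ) * intBinom n m := by
  have h : (Nat.factorial m : ℝ) ≠ 0 := Nat.cast_ne_zero.mpr (Nat.factorial_ne_zero m)
  rw [intBinom, ffact]
  field_simp

lemma pow_eq_sum_binom (d k : ℕ) (hk : k ≤ d) (n : ℤ) :
    ((n : ℝ)) ^ k = ∑ m ∈ Finset.range (d + 1),
      ((stir k m * Nat.factorial m : ℕ) : ℝ) * intBinom n m := by
  rw [pow_eq_sum_stir]
  rw [Finset.sum_subset (show Finset.range (k + 1) ⊆ Finset.range (d + 1) from
    Finset.range_subset_range.mpr (by omega))]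
  · refine Finset.sum_congr rfl fun m _ => ?_
    rw [ffact_eq]; push_cast; ring
  · intro m hm2 hm
    have hz : stir k m = 0 := stir_of_lt (by simp at hm hm2; omega)
    rw [hz]
    simp

lemma fracNorm_nonneg (x : ℝ) : 0 ≤ fracNorm x := abs_nonneg _

lemma fracNorm_le (x : ℝ) (n : ℤ) : fracNorm x ≤ |x - (n : ℝ)| := by
  by_contra h
  push_neg at h
  have h2 : |x - (round x : ℝ)| ≤ 1 / 2 := abs_sub_round x
  have hfr : fracNorm x = |x - (round x : ℝ)| := rfl
  have h3 : |((round x : ℝ)) - (n : ℝ)| < 1 := by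
    have he : ((round x : ℝ)) - (n : ℝ) = (x - n) - (x - round x) := by ring
    rw [he]
    calc |(x - n) - (x - (round x : ℝ))| ≤ |x - (n:ℝ)| + |x - (round x : ℝ)| := abs_sub _ _
      _ < 1 := by rw [← hfr]; linarith
  have h4 : |round x - n| < 1 := by exact_mod_cast h3
  have h5 : round x = n := by rw [abs_lt] at h4; omega
  rw [hfr, h5] at h
  exact lt_irrefl _ h

lemma fracNorm_add_le (x y : ℝ) : fracNorm (x + y) ≤ fracNorm x + fracNorm y := by
  calc fracNorm (x + y) ≤ |x + y - ((round x + round y : ℤ) : ℝ)| := fracNorm_le _ _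
    _ = |(x - round x) + (y - round y)| := by push_cast; ring_nf
    _ ≤ |x - (round x : ℝ)| + |y - (round y : ℝ)| := abs_add_le _ _
    _ = fracNorm x + fracNorm y := rfl

lemma fracNorm_zero : fracNorm 0 = 0 := by simp [fracNorm]

lemma fracNorm_natmul (k : ℕ) (x : ℝ) : fracNorm ((k : ℝ) * x) ≤ (k : ℝ) * fracNorm x := by
  induction k with
  | zero => simp [fracNorm_zero]
  | succ k ih =>
    push_cast
    have : ((k : ℝ) + 1) * x = (k : ℝ) * x + x := by ring
    rw [this]
    calc fracNorm ((k : ℝ) * x + x) ≤ fracNorm ((k : ℝ) * x) + fracNorm x := fracNorm_add_le _ _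
      _ ≤ (k : ℝ) * fracNorm x + fracNorm x := by linarith
      _ = ((k : ℝ) + 1) * fracNorm x := by ring

lemma fracNorm_sum_le {ι : Type*} (s : Finset ι) (f : ι → ℝ) :
    fracNorm (∑ i ∈ s, f i) ≤ ∑ i ∈ s, fracNorm (f i) := by
  classical
  induction s using Finset.induction with
  | empty => simp [fracNorm_zero]
  | insert _ _ h ih =>
    rw [Finset.sum_insert h, Finset.sum_insert h]
    exact le_trans (fracNorm_add_le _ _) (by linarith)

/-- If a polynomial `f : ℤ^t → ℝ` of total degree at most `d`,
with monomial-basis Taylor coefficients `β`, satisfies `‖f‖_{C^∞_*[N⃗]} ≤ M`, then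
there is `1 ≤ r ≤ r₀(d,t)` such that `‖r·f‖_{C^∞[N⃗]} ≤ C(d,t)·M`, where the
`C^∞[N⃗]` norm is computed from the binomial-basis Taylor coefficients `α` of `r·f`. -/
theorem stmt0 :
    ∀ d t : ℕ, 1 ≤ d → 1 ≤ t →
      ∃ (r₀ : ℕ) (C : ℝ), 1 ≤ r₀ ∧ 0 < C ∧
        ∀ (β : (Fin t → ℕ) → ℝ) (N : Fin t → ℕ) (M : ℝ),
          (∀ j, 1 ≤ N j) → 0 ≤ M →
          (∀ i ∈ mIdx t d, i ≠ 0 →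
            (∏ j, (N j : ℝ) ^ (i j)) * fracNorm (β i) ≤ M) →
          ∃ r : ℤ, 1 ≤ r ∧ r ≤ (r₀ : ℤ) ∧
            ∃ α : (Fin t → ℕ) → ℝ,
              (∀ n : Fin t → ℤ,
                (r : ℝ) * (∑ i ∈ mIdx t d, β i * ∏ j, (n j : ℝ) ^ (i j))
                  = ∑ i ∈ mIdx t d, α i * ∏ j, intBinom (n j) (i j)) ∧
              (∀ i ∈ mIdx t d, i ≠ 0 →
                (∏ j, (N j : ℝ) ^ (i j)) * fracNorm (α i) ≤ C * M) := by
  intro d t _hd _ht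
  classical
  -- integer change-of-basis coefficients
  set c : (Fin t → ℕ) → (Fin t → ℕ) → ℕ :=
    fun i m => ∏ j, stir (i j) (m j) * Nat.factorial (m j) with hc
  refine ⟨1, 1 + ∑ m ∈ mIdx t d, ∑ i ∈ mIdx t d, ((c i m : ℕ) : ℝ), le_refl 1, ?_, ?_⟩
  · have : (0:ℝ) ≤ ∑ m ∈ mIdx t d, ∑ i ∈ mIdx t d, ((c i m : ℕ) : ℝ) := by
      apply Finset.sum_nonneg; intro m _; apply Finset.sum_nonneg; intro i _; positivity
    linarith
  intro β N M hN hM hβ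
  refine ⟨1, le_refl 1, by norm_num, fun m => ∑ i ∈ mIdx t d, ((c i m : ℕ) : ℝ) * β i, ?_, ?_⟩
  · -- the polynomial identity
    intro n
    have hmem : ∀ i ∈ mIdx t d, ∀ j, i j ≤ d := by
      intro i hi j
      rw [mIdx, Finset.mem_filter, Finset.mem_Icc] at hi
      exact hi.1.2 j
    have hsub : mIdx t d ⊆ Fintype.piFinset (fun _ : Fin t => Finset.range (d + 1)) := by
      intro p hp
      rw [Fintype.mem_piFinset]
      intro j
      rw [Finset.mem_range]
      exact Nat.lt_succ_of_le (hmem p hp j)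
    have hstep : ∀ i ∈ mIdx t d, (∏ j, ((n j : ℝ)) ^ (i j))
        = ∑ p ∈ Fintype.piFinset (fun _ : Fin t => Finset.range (d + 1)),
            ((c i p : ℕ) : ℝ) * ∏ j, intBinom (n j) (p j) := by
      intro i hi
      have e1 : (∏ j, ((n j : ℝ)) ^ (i j))
          = ∏ j, ∑ m ∈ Finset.range (d + 1),
              ((stir (i j) m * Nat.factorial m : ℕ) : ℝ) * intBinom (n j) m :=
        Finset.prod_congr rfl fun j _ => pow_eq_sum_binom d (i j) (hmem i hi j) (n j)
      rw [e1, Finset.prod_univ_sum]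
      refine Finset.sum_congr rfl fun p _ => ?_
      rw [hc]
      push_cast
      rw [Finset.prod_mul_distrib]
    calc ((1 : ℤ) : ℝ) * (∑ i ∈ mIdx t d, β i * ∏ j, ((n j : ℝ)) ^ (i j))
        = ∑ i ∈ mIdx t d, ∑ p ∈ Fintype.piFinset (fun _ : Fin t => Finset.range (d + 1)),
            β i * (((c i p : ℕ) : ℝ) * ∏ j, intBinom (n j) (p j)) := by
          push_cast
          rw [one_mul]
          exact Finset.sum_congr rfl fun i hi => by rw [hstep i hi, Finset.mul_sum]
      _ = ∑ p ∈ Fintype.piFinset (fun _ : Fin t => Finset.range (d + 1)),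
            ∑ i ∈ mIdx t d, β i * (((c i p : ℕ) : ℝ) * ∏ j, intBinom (n j) (p j)) :=
          Finset.sum_comm
      _ = ∑ p ∈ Fintype.piFinset (fun _ : Fin t => Finset.range (d + 1)),
            (∑ i ∈ mIdx t d, ((c i p : ℕ) : ℝ) * β i) * ∏ j, intBinom (n j) (p j) := by
          refine Finset.sum_congr rfl fun p _ => ?_
          rw [Finset.sum_mul]
          exact Finset.sum_congr rfl fun i _ => by ring
      _ = ∑ p ∈ mIdx t d,
            (∑ i ∈ mIdx t d, ((c i p : ℕ) : ℝ) * β i) * ∏ j, intBinom (n j) (p j) := by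
          refine (Finset.sum_subset hsub ?_).symm
          intro p hp hpn
          have hple : ∀ j, p j ≤ d := by
            intro j
            have := (Fintype.mem_piFinset.mp hp) j
            rw [Finset.mem_range] at this
            omega
          have hpd : ¬ (∑ j, p j ≤ d) := by
            intro hsum
            exact hpn (by
              rw [mIdx, Finset.mem_filter, Finset.mem_Icc]
              exact ⟨⟨fun j => Nat.zero_le _, fun j => hple j⟩, hsum⟩)
          have hz : ∀ i ∈ mIdx t d, ((c i p : ℕ) : ℝ) * β i = 0 := by
            intro i hi
            rw [mIdx, Finset.mem_filter] at hi
            obtain ⟨j, hj⟩ : ∃ j, i j < p j := by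
              by_contra hcon
              push_neg at hcon
              exact hpd (le_trans (Finset.sum_le_sum fun j _ => hcon j) hi.2)
            have : c i p = 0 := by
              rw [hc]
              exact Finset.prod_eq_zero (Finset.mem_univ j)
                (by rw [stir_of_lt hj, zero_mul])
            rw [this]
            simp
          rw [Finset.sum_congr rfl hz]
          simp
  · -- the norm bound
    intro m hm hm0
    set S : ℝ := ∑ m ∈ mIdx t d, ∑ i ∈ mIdx t d, ((c i m : ℕ) : ℝ) with hS
    have hSnn : ∀ m' ∈ mIdx t d, (0:ℝ) ≤ ∑ i ∈ mIdx t d, ((c i m' : ℕ) : ℝ) := by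
      intro m' _
      apply Finset.sum_nonneg; intro i _; positivity
    have hNnn : (0:ℝ) ≤ ∏ j, ((N j : ℝ)) ^ (m j) := by positivity
    have key : ∀ i ∈ mIdx t d,
        (∏ j, ((N j : ℝ)) ^ (m j)) * fracNorm (((c i m : ℕ) : ℝ) * β i)
          ≤ ((c i m : ℕ) : ℝ) * M := by
      intro i hi
      by_cases h0 : c i m = 0
      · rw [h0]
        push_cast
        rw [zero_mul, fracNorm_zero, mul_zero, zero_mul]
      · have hle : ∀ j, m j ≤ i j := by
          intro j
          by_contra hj
          push_neg at hj
          exact h0 (by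
            rw [hc]
            exact Finset.prod_eq_zero (Finset.mem_univ j)
              (by rw [stir_of_lt hj, zero_mul]))
        have hine : i ≠ 0 := by
          obtain ⟨j, hj⟩ := Function.ne_iff.mp hm0
          intro hieq
          have : i j = 0 := by rw [hieq]; rfl
          have := hle j
          simp at hj
          omega
        have hNle : (∏ j, ((N j : ℝ)) ^ (m j)) ≤ ∏ j, ((N j : ℝ)) ^ (i j) := by
          refine Finset.prod_le_prod (fun j _ => by positivity) (fun j _ => ?_)
          exact pow_le_pow_right₀ (by exact_mod_cast hN j) (hle j)
        have hβi := hβ i hi hine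
        have hf1 : fracNorm (((c i m : ℕ) : ℝ) * β i) ≤ ((c i m : ℕ) : ℝ) * fracNorm (β i) :=
          fracNorm_natmul _ _
        have hfnn := fracNorm_nonneg (β i)
        have hcnn : (0:ℝ) ≤ ((c i m : ℕ) : ℝ) := by positivity
        calc (∏ j, ((N j : ℝ)) ^ (m j)) * fracNorm (((c i m : ℕ) : ℝ) * β i)
            ≤ (∏ j, ((N j : ℝ)) ^ (m j)) * (((c i m : ℕ) : ℝ) * fracNorm (β i)) := by
              exact mul_le_mul_of_nonneg_left hf1 hNnn
          _ ≤ (∏ j, ((N j : ℝ)) ^ (i j)) * (((c i m : ℕ) : ℝ) * fracNorm (β i)) := by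
              exact mul_le_mul_of_nonneg_right hNle (by positivity)
          _ = ((c i m : ℕ) : ℝ) * ((∏ j, ((N j : ℝ)) ^ (i j)) * fracNorm (β i)) := by ring
          _ ≤ ((c i m : ℕ) : ℝ) * M := mul_le_mul_of_nonneg_left hβi hcnn
    calc (∏ j, ((N j : ℝ)) ^ (m j)) * fracNorm (∑ i ∈ mIdx t d, ((c i m : ℕ) : ℝ) * β i)
        ≤ (∏ j, ((N j : ℝ)) ^ (m j)) *
            ∑ i ∈ mIdx t d, fracNorm (((c i m : ℕ) : ℝ) * β i) :=
          mul_le_mul_of_nonneg_left (fracNorm_sum_le _ _) hNnn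
      _ = ∑ i ∈ mIdx t d,
            (∏ j, ((N j : ℝ)) ^ (m j)) * fracNorm (((c i m : ℕ) : ℝ) * β i) :=
          Finset.mul_sum _ _ _
      _ ≤ ∑ i ∈ mIdx t d, ((c i m : ℕ) : ℝ) * M := Finset.sum_le_sum key
      _ = (∑ i ∈ mIdx t d, ((c i m : ℕ) : ℝ)) * M := by rw [Finset.sum_mul]
      _ ≤ S * M := by
          refine mul_le_mul_of_nonneg_right ?_ hM
          exact Finset.single_le_sum hSnn hm
      _ ≤ (1 + S) * M := by nlinarith
end

section
/- For all integers d, t ≥ 1 there exists a constant C = C(d,t) > 0 with the following property. Let 0 < ε ≤ 1 and let L be a positive integer with L > C/ε. Let 𝓠 ⊆ [L]^t be a set with |𝓠| ≥ ε·L^t. For q⃗ ∈ 𝓠 let v_{q⃗} := (q⃗^{i⃗})_{i⃗∈𝓘} ∈ ℚ^𝓘. Then the vectors {v_{q⃗} : q⃗ ∈ 𝓠} span ℚ^𝓘 as a ℚ-vector space. -/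
open MvPolynomial in
lemma sz : ∀ (n : ℕ) (p : MvPolynomial (Fin n) ℚ), p ≠ 0 → ∀ S : Finset ℚ,
    ((Fintype.piFinset fun _ : Fin n => S).filter (fun x => eval x p = 0)).card * S.card
      ≤ p.totalDegree * S.card ^ n := by
  intro n
  induction n with
  | zero =>
    intro p hp S
    obtain ⟨a, rfl⟩ := C_surjective (Fin 0) p
    have ha : a ≠ 0 := fun h => hp (by simp [h])
    have he : ((Fintype.piFinset fun _ : Fin 0 => S).filter (fun x => eval x (C a) = 0)) = ∅ := by
      ext x; simp [ha]
    rw [he]; simp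
  | succ n ih =>
    intro p hp S
    set f := finSuccEquiv ℚ n p with hf
    have hf0 : f ≠ 0 := by
      simp only [hf, ne_eq, EmbeddingLike.map_eq_zero_iff]; exact hp
    set m := f.natDegree with hm
    set g := f.coeff m with hg
    have hg0 : g ≠ 0 := Polynomial.leadingCoeff_ne_zero.mpr hf0
    have hdeg : g.totalDegree + m ≤ p.totalDegree :=
      totalDegree_coeff_finSuccEquiv_add_le p m hg0
    set T := Fintype.piFinset fun _ : Fin n => S with hT
    have hTcard : T.card = S.card ^ n := by
      simp [hT, Fintype.card_piFinset]
    set Z := (Fintype.piFinset fun _ : Fin (n+1) => S).filter (fun x => eval x p = 0) with hZ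
    have key : Z.card ≤ ∑ s ∈ T, (S.filter fun y => eval (Fin.cons y s) p = 0).card := by
      rw [← Finset.card_sigma]
      apply Finset.card_le_card_of_injOn (fun x => ⟨Fin.tail x, x 0⟩)
      · intro x hx
        simp only [hZ, Finset.mem_coe, Finset.mem_filter, Fintype.mem_piFinset] at hx
        simp only [Finset.mem_coe, Finset.mem_sigma, Finset.mem_filter, Fintype.mem_piFinset, hT]
        refine ⟨fun j => hx.1 _, hx.1 0, ?_⟩
        rw [Fin.cons_self_tail]; exact hx.2
      · intro x _ y _ h
        simp only [Sigma.mk.inj_iff] at h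
        funext i
        refine Fin.cases ?_ ?_ i
        · exact eq_of_heq h.2
        · intro j; exact congrFun h.1 j
    have hb : ∀ s ∈ T, eval s g ≠ 0 →
        (S.filter fun y => eval (Fin.cons y s) p = 0).card ≤ m := by
      intro s _ hs
      set F := f.map (eval s) with hF
      have hF0 : F ≠ 0 := fun h => hs (by
        have := congrArg (fun q => Polynomial.coeff q m) h
        simpa [hF, Polynomial.coeff_map] using this)
      have hsub : (S.filter fun y => eval (Fin.cons y s) p = 0) ⊆ F.roots.toFinset := by
        intro y hy
        simp only [Finset.mem_filter] at hy
        rw [Multiset.mem_toFinset, Polynomial.mem_roots hF0, Polynomial.IsRoot]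
        rw [eval_eq_eval_mv_eval'] at hy
        exact hy.2
      calc (S.filter fun y => eval (Fin.cons y s) p = 0).card
          ≤ F.roots.toFinset.card := Finset.card_le_card hsub
        _ ≤ Multiset.card F.roots := Multiset.toFinset_card_le _
        _ ≤ F.natDegree := Polynomial.card_roots' F
        _ ≤ m := Polynomial.natDegree_map_le
    have h1 : ∑ s ∈ T.filter (fun s => eval s g = 0),
        (S.filter fun y => eval (Fin.cons y s) p = 0).card ≤ g.totalDegree * S.card ^ n := by
      calc ∑ s ∈ T.filter (fun s => eval s g = 0),
            (S.filter fun y => eval (Fin.cons y s) p = 0).card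
          ≤ (T.filter (fun s => eval s g = 0)).card * S.card := by
            rw [← smul_eq_mul]
            exact Finset.sum_le_card_nsmul _ _ _
              (fun s _ => Finset.card_le_card (Finset.filter_subset _ _))
        _ ≤ g.totalDegree * S.card ^ n := ih g hg0 S
    have h2 : ∑ s ∈ T.filter (fun s => ¬ eval s g = 0),
        (S.filter fun y => eval (Fin.cons y s) p = 0).card ≤ S.card ^ n * m := by
      calc ∑ s ∈ T.filter (fun s => ¬ eval s g = 0),
            (S.filter fun y => eval (Fin.cons y s) p = 0).card
          ≤ (T.filter (fun s => ¬ eval s g = 0)).card * m := by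
            rw [← smul_eq_mul]
            exact Finset.sum_le_card_nsmul _ _ _
              (fun s hs => hb s (Finset.mem_filter.mp hs).1 (Finset.mem_filter.mp hs).2)
        _ ≤ T.card * m := Nat.mul_le_mul_right _ (Finset.card_le_card (Finset.filter_subset _ _))
        _ = S.card ^ n * m := by rw [hTcard]
    have hsplit : Z.card ≤ p.totalDegree * S.card ^ n := by
      rw [← Finset.sum_filter_add_sum_filter_not T (fun s => eval s g = 0)] at key
      calc Z.card ≤ _ := key
        _ ≤ g.totalDegree * S.card ^ n + S.card ^ n * m := Nat.add_le_add h1 h2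
        _ = (g.totalDegree + m) * S.card ^ n := by ring
        _ ≤ p.totalDegree * S.card ^ n := Nat.mul_le_mul_right _ hdeg
    calc Z.card * S.card ≤ (p.totalDegree * S.card ^ n) * S.card :=
          Nat.mul_le_mul_right _ hsplit
      _ = p.totalDegree * S.card ^ (n+1) := by ring

open MvPolynomial

/-- if `𝓠 ⊆ [L]^t` has `|𝓠| ≥ εL^t` and `L > C(d,t)/ε`, then the
vectors `v_{q⃗} = (q⃗^{i⃗})_{i⃗∈𝓘}` for `q⃗ ∈ 𝓠` span `ℚ^𝓘`. -/
theorem stmt5 :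
    ∀ d t : ℕ, 1 ≤ d → 1 ≤ t →
      ∃ C : ℝ, 0 < C ∧
        ∀ (ε : ℝ) (L : ℕ) (Q : Finset (Fin t → ℤ)),
          0 < ε → ε ≤ 1 → C / ε < (L : ℝ) →
          Q ⊆ Finset.Icc (1 : Fin t → ℤ) (fun _ => (L : ℤ)) →
          ε * (L : ℝ) ^ t ≤ (Q.card : ℝ) →
          Submodule.span ℚ
            ((fun q : Fin t → ℤ =>
              (fun i : {i // i ∈ mIdx t d} => ∏ j, (q j : ℚ) ^ ((i : Fin t → ℕ) j)))
              '' (Q : Set (Fin t → ℤ))) = ⊤ := by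
  intro d t hd ht
  refine ⟨d, by exact_mod_cast hd.trans_lt (lt_add_one d) |> fun _ => (by positivity : (0:ℝ) < d), ?_⟩
  intro ε L Q hε hε1 hL hQsub hQcard
  by_contra hspan
  obtain ⟨φ, hφ0, hφmap⟩ := Submodule.exists_dual_map_eq_bot_of_lt_top
    (lt_top_iff_ne_top.mpr hspan) inferInstance
  set c : {i // i ∈ mIdx t d} → ℚ := fun i => φ (fun j => if i = j then 1 else 0) with hc
  have hφeq : ∀ x : {i // i ∈ mIdx t d} → ℚ, φ x = ∑ i, x i * c i := by
    intro x
    rw [LinearMap.pi_apply_eq_sum_univ φ x]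
    exact Finset.sum_congr rfl fun i _ => smul_eq_mul ..
  have hex : ∃ i, c i ≠ 0 := by
    by_contra h
    push_neg at h
    exact hφ0 (LinearMap.ext fun x => by rw [hφeq]; simp [h])
  obtain ⟨i₀, hi₀⟩ := hex
  set e : {i // i ∈ mIdx t d} → (Fin t →₀ ℕ) := fun i => Finsupp.equivFunOnFinite.symm i.1 with he
  have he_inj : Function.Injective e :=
    Finsupp.equivFunOnFinite.symm.injective.comp Subtype.val_injective
  set p : MvPolynomial (Fin t) ℚ := ∑ i : {i // i ∈ mIdx t d}, monomial (e i) (c i) with hp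
  have hcoeff : coeff (e i₀) p = c i₀ := by
    rw [hp, coeff_sum, Finset.sum_eq_single i₀]
    · rw [coeff_monomial, if_pos rfl]
    · intro i _ hne
      rw [coeff_monomial, if_neg (fun h => hne (he_inj h))]
    · intro h; exact absurd (Finset.mem_univ i₀) h
  have hp0 : p ≠ 0 := fun h => hi₀ (by rw [← hcoeff, h, coeff_zero])
  have hdeg : p.totalDegree ≤ d := by
    rw [hp]
    refine (totalDegree_finset_sum _ _).trans (Finset.sup_le fun i _ => ?_)
    refine (totalDegree_monomial_le _ _).trans ?_
    have : (e i).sum (fun _ => id) = ∑ j, i.1 j := by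
      rw [Finsupp.sum_fintype _ _ (fun _ => rfl)]
      exact Finset.sum_congr rfl fun j _ => by simp [he]
    rw [this]
    exact (Finset.mem_filter.mp i.2).2
  have heval : ∀ q ∈ Q, eval (fun j => ((q j : ℚ))) p = 0 := by
    intro q hq
    have hv : (fun i : {i // i ∈ mIdx t d} => ∏ j, (q j : ℚ) ^ (i.1 j)) ∈
        Submodule.span ℚ ((fun q : Fin t → ℤ =>
          (fun i : {i // i ∈ mIdx t d} => ∏ j, (q j : ℚ) ^ ((i : Fin t → ℕ) j)))
          '' (Q : Set (Fin t → ℤ))) :=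
      Submodule.subset_span (Set.mem_image_of_mem _ (by exact_mod_cast hq))
    have hφv : φ (fun i : {i // i ∈ mIdx t d} => ∏ j, (q j : ℚ) ^ (i.1 j)) = 0 := by
      have := Submodule.mem_map_of_mem (f := φ) hv
      rw [hφmap, Submodule.mem_bot] at this
      exact this
    rw [hp, map_sum]
    rw [hφeq] at hφv
    rw [← hφv]
    refine Finset.sum_congr rfl fun i _ => ?_
    rw [eval_monomial, Finsupp.prod_fintype _ _ (fun j => pow_zero _)]
    simp [he, mul_comm]
  set S : Finset ℚ := (Finset.Icc (1:ℤ) (L:ℤ)).image (fun z : ℤ => (z : ℚ)) with hS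
  have hScard : S.card = L := by
    rw [hS, Finset.card_image_of_injective _ Int.cast_injective, Int.card_Icc]
    simp
  set ψ : (Fin t → ℤ) → (Fin t → ℚ) := fun q j => (q j : ℚ) with hψ
  have hψinj : Function.Injective ψ := by
    intro a b h
    funext j
    exact Int.cast_injective (congrFun h j)
  have hQZ : Q.image ψ ⊆
      (Fintype.piFinset fun _ : Fin t => S).filter (fun x => eval x p = 0) := by
    intro x hx
    obtain ⟨q, hq, rfl⟩ := Finset.mem_image.mp hx
    have hqmem := Finset.mem_Icc.mp (hQsub hq)
    refine Finset.mem_filter.mpr ⟨Fintype.mem_piFinset.mpr fun j => ?_, heval q hq⟩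
    exact Finset.mem_image.mpr ⟨q j, Finset.mem_Icc.mpr ⟨hqmem.1 j, hqmem.2 j⟩, rfl⟩
  have hcard : Q.card * L ≤ d * L ^ t := by
    calc Q.card * L = (Q.image ψ).card * S.card := by
          rw [Finset.card_image_of_injective _ hψinj, hScard]
      _ ≤ ((Fintype.piFinset fun _ : Fin t => S).filter
            (fun x => eval x p = 0)).card * S.card :=
          Nat.mul_le_mul_right _ (Finset.card_le_card hQZ)
      _ ≤ p.totalDegree * S.card ^ t := sz t p hp0 S
      _ ≤ d * L ^ t := by rw [hScard]; exact Nat.mul_le_mul_right _ hdeg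
  have hL0 : (0:ℝ) < L := lt_of_le_of_lt (by positivity) hL
  have h1 : (d:ℝ) < ε * L := by
    rw [div_lt_iff₀ hε] at hL
    linarith [hL]
  have h2 : (Q.card : ℝ) * L ≤ d * L ^ t := by exact_mod_cast hcard
  have h3 : ε * (L:ℝ) ^ t * L ≤ (Q.card : ℝ) * L :=
    mul_le_mul_of_nonneg_right hQcard hL0.le
  nlinarith [pow_pos hL0 t, mul_lt_mul_of_pos_right h1 (pow_pos hL0 t)]
end

section
/- Let G be a group, let G₂ be a subgroup of G containing the commutator subgroup [G,G], and let η₂ : G₂ → ℝ/ℤ be a group homomorphism which vanishes on [G,[G,G]]. Let t ≥ 1 be an integer, let a₁,…,aₜ ∈ G, and let n₁,…,nₜ, h₁,…,hₜ ∈ ℤ. Then the element w := (a₁^{n₁+h₁}·a₂^{n₂+h₂}⋯aₜ^{nₜ+hₜ})·(a₁^{h₁}·a₂^{h₂}⋯aₜ^{hₜ})⁻¹·(a₁^{n₁}·a₂^{n₂}⋯aₜ^{nₜ})⁻¹ lies in [G,G] ⊆ G₂, and η₂(w) = Σ_{1≤j<i≤t} hⱼ·nᵢ·η₂(⁅aⱼ,aᵢ⁆).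 -/
open scoped commutatorElement

set_option linter.unusedSectionVars false
section Aux

variable {G : Type*} [Group G] (G₂ : Subgroup G)
    (hcomm : commutator G ≤ G₂)
    (η₂ : G → UnitAddCircle)
    (hhom : ∀ x ∈ G₂, ∀ y ∈ G₂, η₂ (x * y) = η₂ x + η₂ y)
    (hvan : ∀ x ∈ (⁅(⊤ : Subgroup G), commutator G⁆ : Subgroup G), η₂ x = 0)

lemma aux_comm_mem (x y : G) : ⁅x, y⁆ ∈ commutator G :=
  Subgroup.commutator_mem_commutator (Subgroup.mem_top x) (Subgroup.mem_top y)

lemma aux_conj_mem (g : G) {c : G} (hc : c ∈ commutator G) :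
    g * c * g⁻¹ ∈ commutator G :=
  (inferInstance : (commutator G).Normal).conj_mem c hc g

include hhom in
lemma aux_eta_one : η₂ 1 = 0 := by
  have := hhom 1 G₂.one_mem 1 G₂.one_mem
  rw [mul_one] at this
  exact (left_eq_add.mp this)

include hhom in
lemma aux_eta_inv {x : G} (hx : x ∈ G₂) : η₂ x⁻¹ = - η₂ x := by
  have := hhom x hx x⁻¹ (G₂.inv_mem hx)
  rw [mul_inv_cancel, aux_eta_one G₂ η₂ hhom] at this
  exact eq_neg_of_add_eq_zero_right this.symm

include hcomm hhom hvan in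
lemma aux_eta_conj (g : G) {c : G} (hc : c ∈ commutator G) :
    η₂ (g * c * g⁻¹) = η₂ c := by
  have hmem : ⁅g, c⁆ ∈ (⁅(⊤ : Subgroup G), commutator G⁆ : Subgroup G) :=
    Subgroup.commutator_mem_commutator (Subgroup.mem_top g) hc
  have hN : (⁅(⊤ : Subgroup G), commutator G⁆ : Subgroup G) ≤ commutator G :=
    Subgroup.commutator_mono le_top le_top
  have key : g * c * g⁻¹ = ⁅g, c⁆ * c := by
    rw [commutatorElement_def]; group
  rw [key, hhom _ (hcomm (hN hmem)) _ (hcomm hc), hvan _ hmem, zero_add]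

include hcomm hhom hvan in
lemma aux_beta_mul_left (x y z : G) :
    η₂ ⁅x * y, z⁆ = η₂ ⁅x, z⁆ + η₂ ⁅y, z⁆ := by
  have key : ⁅x * y, z⁆ = (x * ⁅y, z⁆ * x⁻¹) * ⁅x, z⁆ := by
    simp only [commutatorElement_def]; group
  rw [key, hhom _ (hcomm (aux_conj_mem x (aux_comm_mem y z))) _ (hcomm (aux_comm_mem x z)),
    aux_eta_conj G₂ hcomm η₂ hhom hvan x (aux_comm_mem y z), add_comm]

include hcomm hhom hvan in
lemma aux_beta_mul_right (x y z : G) :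
    η₂ ⁅x, y * z⁆ = η₂ ⁅x, y⁆ + η₂ ⁅x, z⁆ := by
  have key : ⁅x, y * z⁆ = ⁅x, y⁆ * (y * ⁅x, z⁆ * y⁻¹) := by
    simp only [commutatorElement_def]; group
  rw [key, hhom _ (hcomm (aux_comm_mem x y)) _ (hcomm (aux_conj_mem y (aux_comm_mem x z))),
    aux_eta_conj G₂ hcomm η₂ hhom hvan y (aux_comm_mem x z)]

include hcomm hhom hvan in
lemma aux_beta_one_right (x : G) : η₂ ⁅x, (1 : G)⁆ = 0 := by
  rw [commutatorElement_one_right]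
  exact aux_eta_one G₂ η₂ hhom

include hcomm hhom hvan in
lemma aux_beta_inv_right (x z : G) : η₂ ⁅x, z⁻¹⁆ = - η₂ ⁅x, z⁆ := by
  have := aux_beta_mul_right G₂ hcomm η₂ hhom hvan x z z⁻¹
  rw [mul_inv_cancel, aux_beta_one_right G₂ hcomm η₂ hhom hvan] at this
  exact eq_neg_of_add_eq_zero_right this.symm

include hcomm hhom hvan in
lemma aux_beta_pow_right (x z : G) (m : ℕ) : η₂ ⁅x, z ^ m⁆ = m • η₂ ⁅x, z⁆ := by
  induction m with
  | zero => simpa using aux_beta_one_right G₂ hcomm η₂ hhom hvan x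
  | succ k ih =>
      rw [pow_succ, aux_beta_mul_right G₂ hcomm η₂ hhom hvan, ih, succ_nsmul]

include hcomm hhom hvan in
lemma aux_beta_zpow_right (x z : G) (m : ℤ) : η₂ ⁅x, z ^ m⁆ = m • η₂ ⁅x, z⁆ := by
  cases m with
  | ofNat k =>
      rw [Int.ofNat_eq_coe, zpow_natCast, aux_beta_pow_right G₂ hcomm η₂ hhom hvan,
        natCast_zsmul]
  | negSucc k =>
      rw [zpow_negSucc, aux_beta_inv_right G₂ hcomm η₂ hhom hvan,
        aux_beta_pow_right G₂ hcomm η₂ hhom hvan, Int.negSucc_eq, neg_smul]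
      norm_cast

include hcomm hhom hvan in
lemma aux_beta_swap (x y : G) : η₂ ⁅x, y⁆ = - η₂ ⁅y, x⁆ := by
  rw [← commutatorElement_inv, aux_eta_inv G₂ η₂ hhom (hcomm (aux_comm_mem y x))]

include hcomm hhom hvan in
lemma aux_eta_comm_list (x : G) (L : List G) :
    η₂ ⁅x, L.prod⁆ = (L.map fun y => η₂ ⁅x, y⁆).sum := by
  induction L with
  | nil => simpa using aux_beta_one_right G₂ hcomm η₂ hhom hvan x
  | cons y L ih =>
      rw [List.prod_cons, aux_beta_mul_right G₂ hcomm η₂ hhom hvan, ih, List.map_cons,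
        List.sum_cons]

include hcomm hhom hvan in
lemma aux_main (t : ℕ) (a : Fin t → G) (n h : Fin t → ℤ) :
    (List.ofFn (fun i => a i ^ (n i + h i))).prod
        * ((List.ofFn (fun i => a i ^ (h i))).prod)⁻¹
        * ((List.ofFn (fun i => a i ^ (n i))).prod)⁻¹ ∈ commutator G ∧
      η₂ ((List.ofFn (fun i => a i ^ (n i + h i))).prod
        * ((List.ofFn (fun i => a i ^ (h i))).prod)⁻¹
        * ((List.ofFn (fun i => a i ^ (n i))).prod)⁻¹)
        = ∑ i : Fin t, ∑ j : Fin t,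
            if j < i then (h j * n i) • η₂ ⁅a j, a i⁆ else 0 := by
  induction t with
  | zero =>
      simp only [List.ofFn_zero, List.prod_nil, inv_one, mul_one, Finset.univ_eq_empty,
        Finset.sum_empty]
      exact ⟨(commutator G).one_mem, aux_eta_one G₂ η₂ hhom⟩
  | succ t ih =>
      obtain ⟨hw', heq'⟩ := ih (fun i => a i.succ) (fun i => n i.succ) (fun i => h i.succ)
      set A' : G := (List.ofFn (fun i : Fin t => a i.succ ^ (n i.succ + h i.succ))).prod with hA'
      set H' : G := (List.ofFn (fun i : Fin t => a i.succ ^ (h i.succ))).prod with hH'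
      set N' : G := (List.ofFn (fun i : Fin t => a i.succ ^ (n i.succ))).prod with hN'
      set w' : G := A' * H'⁻¹ * N'⁻¹ with hw'def
      set c : G := ⁅N', (a 0 ^ (h 0))⁻¹⁆ with hc
      have hcmem : c ∈ commutator G := aux_comm_mem N' _
      have hwc : w' * c ∈ commutator G := (commutator G).mul_mem hw' hcmem
      have key : (List.ofFn (fun i : Fin (t+1) => a i ^ (n i + h i))).prod
          * ((List.ofFn (fun i : Fin (t+1) => a i ^ (h i))).prod)⁻¹
          * ((List.ofFn (fun i : Fin (t+1) => a i ^ (n i))).prod)⁻¹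
          = (a 0 ^ (n 0) * a 0 ^ (h 0)) * (w' * c) * (a 0 ^ (n 0) * a 0 ^ (h 0))⁻¹ := by
        rw [List.ofFn_succ, List.ofFn_succ, List.ofFn_succ, List.prod_cons, List.prod_cons,
          List.prod_cons, ← hA', ← hH', ← hN', hw'def, hc, zpow_add, commutatorElement_def]
        group
      constructor
      · rw [key]; exact aux_conj_mem _ hwc
      · have hetaN : η₂ ⁅a 0, N'⁆ = ∑ i : Fin t, (n i.succ) • η₂ ⁅a 0, a i.succ⁆ := by
          rw [hN', aux_eta_comm_list G₂ hcomm η₂ hhom hvan, List.map_ofFn, List.sum_ofFn]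
          refine Finset.sum_congr rfl fun i _ => ?_
          simp only [Function.comp_apply]
          exact aux_beta_zpow_right G₂ hcomm η₂ hhom hvan (a 0) (a i.succ) (n i.succ)
        have hetac : η₂ c = ∑ i : Fin t, (h 0 * n i.succ) • η₂ ⁅a 0, a i.succ⁆ := by
          rw [hc, ← zpow_neg, aux_beta_zpow_right G₂ hcomm η₂ hhom hvan N' (a 0) (-(h 0)),
            aux_beta_swap G₂ hcomm η₂ hhom hvan N' (a 0), smul_neg, neg_smul, neg_neg,
            hetaN, Finset.smul_sum]
          exact Finset.sum_congr rfl fun i _ => smul_smul _ _ _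
        have hsum : (∑ i : Fin (t+1), ∑ j : Fin (t+1),
              if j < i then (h j * n i) • η₂ ⁅a j, a i⁆ else 0)
            = (∑ i : Fin t, ∑ j : Fin t,
                if j < i then (h j.succ * n i.succ) • η₂ ⁅a j.succ, a i.succ⁆ else 0)
              + ∑ i : Fin t, (h 0 * n i.succ) • η₂ ⁅a 0, a i.succ⁆ := by
          rw [Fin.sum_univ_succ]
          simp only [Fin.not_lt_zero, if_false, Finset.sum_const_zero, zero_add]
          rw [← Finset.sum_add_distrib]
          refine Finset.sum_congr rfl fun i _ => ?_
          rw [Fin.sum_univ_succ, if_pos (Fin.succ_pos i), add_comm]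
          congr 1
          refine Finset.sum_congr rfl fun j _ => ?_
          simp only [Fin.succ_lt_succ_iff]
        rw [key, aux_eta_conj G₂ hcomm η₂ hhom hvan _ hwc,
          hhom _ (hcomm hw') _ (hcomm hcmem), heq', hetac, hsum]

end Aux

/-- with `G₂ ⊇ [G,G]` and `η₂ : G₂ → ℝ/ℤ` a homomorphism vanishing on
`[G,[G,G]]` (encoded as a function `η₂ : G → ℝ/ℤ` additive on pairs of elements of
`G₂`), for `a₁,…,aₜ ∈ G` and integers `n₁,…,nₜ,h₁,…,hₜ` the element
`w = (a₁^{n₁+h₁}⋯aₜ^{nₜ+hₜ})(a₁^{h₁}⋯aₜ^{hₜ})⁻¹(a₁^{n₁}⋯aₜ^{nₜ})⁻¹` lies in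
`[G,G]` and `η₂(w) = Σ_{j<i} hⱼnᵢ·η₂(⁅aⱼ,aᵢ⁆)`. -/
theorem stmt14 {G : Type*} [Group G] (G₂ : Subgroup G)
    (hcomm : commutator G ≤ G₂)
    (η₂ : G → UnitAddCircle)
    (hhom : ∀ x ∈ G₂, ∀ y ∈ G₂, η₂ (x * y) = η₂ x + η₂ y)
    (hvan : ∀ x ∈ (⁅(⊤ : Subgroup G), commutator G⁆ : Subgroup G), η₂ x = 0)
    (t : ℕ) (ht : 1 ≤ t) (a : Fin t → G) (n h : Fin t → ℤ) :
    (List.ofFn (fun i => a i ^ (n i + h i))).prod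
        * ((List.ofFn (fun i => a i ^ (h i))).prod)⁻¹
        * ((List.ofFn (fun i => a i ^ (n i))).prod)⁻¹ ∈ commutator G ∧
      η₂ ((List.ofFn (fun i => a i ^ (n i + h i))).prod
        * ((List.ofFn (fun i => a i ^ (h i))).prod)⁻¹
        * ((List.ofFn (fun i => a i ^ (n i))).prod)⁻¹)
        = ∑ i : Fin t, ∑ j : Fin t,
            if j < i then (h j * n i) • η₂ ⁅a j, a i⁆ else 0 :=
  aux_main G₂ hcomm η₂ hhom hvan t a n h
end

section
/- Let X be a metric space equipped with a Borel probability measure, let t ≥ 2 be an integer, let N₁,…,Nₜ ≥ 1 be integers, let 0 < δ < 1, and let g : ℤ^t → X. If the sequence (g(n⃗))_{n⃗∈[N⃗]} is not δ-equidistributed, then there are at least (δ/4)·N₂⋯Nₜ tuples (n₂,…,nₜ) ∈ [N₂]×⋯×[Nₜ] for which the one-parameter sequence (g(n, n₂,…,nₜ))_{n∈[N₁]} is not (δ/2)-equidistributed. -/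
open MeasureTheory
open scoped Classical

/-- `(x(n))_{n ∈ P}` is `δ`-equidistributed in the metric probability space `X`:
`|(1/|P|)Σ_{n∈P} F(x(n)) − ∫ F| ≤ δ‖F‖_Lip` for every Lipschitz `F : X → ℂ`, where
`‖F‖_Lip = sup|F| + Lipschitz constant` is encoded by quantifying over admissible
bounds `Kb` (for `sup|F|`) and `Kl` (for the Lipschitz constant). -/
def EquiDist {X : Type*} [MetricSpace X] [MeasurableSpace X] (μ : Measure X)
    {ι : Type*} (P : Finset ι) (g : ι → X) (δ : ℝ) : Prop :=
  ∀ (F : X → ℂ) (Kb Kl : ℝ),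
    (∀ x, ‖F x‖ ≤ Kb) → (∀ x y, ‖F x - F y‖ ≤ Kl * dist x y) →
    ‖(∑ n ∈ P, F (g n)) / (P.card : ℂ) - ∫ x, F x ∂μ‖ ≤ δ * (Kb + Kl)

/-- if `(g(n⃗))_{n⃗∈[N⃗]}` (with `t = s+1 ≥ 2` parameters) is not
`δ`-equidistributed, then for at least `(δ/4)N₂⋯Nₜ` of the tuples
`(n₂,…,nₜ) ∈ [N₂]×⋯×[Nₜ]`, the one-parameter sequence `(g(n,n₂,…,nₜ))_{n∈[N₁]}`
is not `(δ/2)`-equidistributed. -/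
theorem stmt16 (X : Type) [MetricSpace X] [MeasurableSpace X] [BorelSpace X]
    (μ : Measure X) [IsProbabilityMeasure μ]
    (s : ℕ) (hs : 1 ≤ s) (N : Fin (s + 1) → ℕ) (hN : ∀ j, 1 ≤ N j)
    (δ : ℝ) (hδ : 0 < δ) (hδ' : δ < 1) (g : (Fin (s + 1) → ℤ) → X)
    (hne : ¬ EquiDist μ (Finset.Icc (1 : Fin (s + 1) → ℤ) (fun j => (N j : ℤ))) g δ) :
    (δ / 4) * ∏ j : Fin s, (N j.succ : ℝ) ≤
      (((Finset.Icc (1 : Fin s → ℤ) (fun j => (N j.succ : ℤ))).filter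
        (fun m : Fin s → ℤ =>
          ¬ EquiDist μ (Finset.Icc (1 : ℤ) ((N 0 : ℤ)))
            (fun n => g (Fin.cons n m)) (δ / 2))).card : ℝ) := by
  classical
  set P := Finset.Icc (1 : Fin (s + 1) → ℤ) (fun j => (N j : ℤ)) with hPdef
  set Q := Finset.Icc (1 : Fin s → ℤ) (fun j => (N j.succ : ℤ)) with hQdef
  set R := Finset.Icc (1 : ℤ) ((N 0 : ℤ)) with hRdef
  set B := Q.filter
      (fun m : Fin s → ℤ =>
        ¬ EquiDist μ R (fun n => g (Fin.cons n m)) (δ / 2)) with hBdef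
  obtain ⟨F, Kb, Kl, hKb, hKl, herr⟩ :
      ∃ (F : X → ℂ) (Kb Kl : ℝ), (∀ x, ‖F x‖ ≤ Kb) ∧ (∀ x y, ‖F x - F y‖ ≤ Kl * dist x y) ∧
        δ * (Kb + Kl) < ‖(∑ n ∈ P, F (g n)) / (P.card : ℂ) - ∫ x, F x ∂μ‖ := by
    unfold EquiDist at hne; push_neg at hne
    obtain ⟨F, Kb, Kl, h1, h2, h3⟩ := hne
    exact ⟨F, Kb, Kl, h1, h2, h3⟩
  set I := ∫ x, F x ∂μ with hIdef
  -- cardinalities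
  have hRcard : R.card = N 0 := by
    rw [hRdef, Int.card_Icc]; omega
  have hQcard : Q.card = ∏ j : Fin s, N j.succ := by
    rw [hQdef, Pi.card_Icc]
    refine Finset.prod_congr rfl fun j _ => ?_
    simp [Int.card_Icc]
  have hQpos : 0 < Q.card := by
    rw [hQcard]; exact Finset.prod_pos fun j _ => hN _
  have hRpos : 0 < R.card := by rw [hRcard]; exact hN 0
  have hPcard : P.card = R.card * Q.card := by
    rw [hPdef, hQdef, hRdef, Pi.card_Icc, Pi.card_Icc, Fin.prod_univ_succ]
    congr 1
  have hPpos : 0 < P.card := by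
    rw [hPcard]; exact Nat.mul_pos hRpos hQpos
  have hprodcast : (∏ j : Fin s, (N j.succ : ℝ)) = (Q.card : ℝ) := by
    rw [hQcard]; push_cast; ring
  have hBsub : (B.card : ℝ) ≤ (Q.card : ℝ) := by
    exact_mod_cast Finset.card_le_card (Finset.filter_subset _ _)
  have hBnn : (0 : ℝ) ≤ (B.card : ℝ) := Nat.cast_nonneg _
  have hKb0 : 0 ≤ Kb := le_trans (norm_nonneg (F (g 1))) (hKb _)
  rw [hprodcast]
  -- sum decomposition
  have hsum :
      ∑ v ∈ P, F (g v) = ∑ m ∈ Q, ∑ n ∈ R, F (g (Fin.cons n m)) := by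
    rw [← Finset.sum_product' Q R (fun m n => F (g (Fin.cons n m)))]
    refine Finset.sum_nbij' (fun v => (Fin.tail v, v 0)) (fun p => Fin.cons p.2 p.1)
      ?_ ?_ ?_ ?_ ?_
    · intro v hv
      rw [hPdef, Finset.mem_Icc, Pi.le_def, Pi.le_def] at hv
      simp only [Finset.mem_product, hQdef, hRdef, Finset.mem_Icc, Pi.le_def]
      exact ⟨⟨fun i => hv.1 i.succ, fun i => hv.2 i.succ⟩, hv.1 0, hv.2 0⟩
    · intro p hp
      simp only [Finset.mem_product, hQdef, hRdef, Finset.mem_Icc, Pi.le_def] at hp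
      rw [hPdef, Finset.mem_Icc, Pi.le_def, Pi.le_def]
      constructor
      · intro j
        refine Fin.cases ?_ ?_ j
        · simpa using hp.2.1
        · intro i; simpa using hp.1.1 i
      · intro j
        refine Fin.cases ?_ ?_ j
        · simpa using hp.2.2
        · intro i; simpa using hp.1.2 i
    · intro v _; exact Fin.cons_self_tail v
    · intro p _; simp [Fin.tail_cons]
    · intro v _; rw [Fin.cons_self_tail]
  -- key identity: full average error is the average of per-tuple errors
  have hRC : ((R.card : ℂ)) ≠ 0 := Nat.cast_ne_zero.2 hRpos.ne'
  have hQC : ((Q.card : ℂ)) ≠ 0 := Nat.cast_ne_zero.2 hQpos.ne'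
  have hkey : (∑ v ∈ P, F (g v)) / (P.card : ℂ) - I
      = (∑ m ∈ Q, ((∑ n ∈ R, F (g (Fin.cons n m))) / (R.card : ℂ) - I))
        / (Q.card : ℂ) := by
    have h1 : (∑ m ∈ Q, ((∑ n ∈ R, F (g (Fin.cons n m))) / (R.card : ℂ) - I))
        = (∑ v ∈ P, F (g v)) / (R.card : ℂ) - (Q.card : ℂ) * I := by
      rw [Finset.sum_sub_distrib, ← Finset.sum_div, ← hsum, Finset.sum_const,
        nsmul_eq_mul]
    rw [h1, sub_div, div_div, mul_comm ((Q.card : ℂ)) I, mul_div_assoc,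
      div_self hQC, mul_one, hPcard, Nat.cast_mul]
  -- bound the error by the average of per-tuple errors
  have hQR : (0 : ℝ) < (Q.card : ℝ) := by exact_mod_cast hQpos
  have havg : ‖(∑ v ∈ P, F (g v)) / (P.card : ℂ) - I‖
      ≤ (∑ m ∈ Q, ‖(∑ n ∈ R, F (g (Fin.cons n m))) / (R.card : ℂ) - I‖)
        / (Q.card : ℝ) := by
    rw [hkey, norm_div, Complex.norm_natCast]
    exact (div_le_div_iff_of_pos_right hQR).2 (norm_sum_le _ _)
  by_cases hKl0 : 0 ≤ Kl
  · -- main case: Lipschitz constant nonnegative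
    have hE0 : 0 ≤ Kb + Kl := by linarith
    have hInorm : ‖I‖ ≤ Kb := by
      have := MeasureTheory.norm_integral_le_of_norm_le_const
        (μ := μ) (f := F) (C := Kb) (Filter.Eventually.of_forall hKb)
      simpa using this
    -- per-tuple trivial bound
    have hbound : ∀ m : Fin s → ℤ,
        ‖(∑ n ∈ R, F (g (Fin.cons n m))) / (R.card : ℂ) - I‖ ≤ 2 * Kb := by
      intro m
      have h1 : ‖∑ n ∈ R, F (g (Fin.cons n m))‖ ≤ (R.card : ℝ) * Kb := by
        calc ‖∑ n ∈ R, F (g (Fin.cons n m))‖ ≤ ∑ n ∈ R, ‖F (g (Fin.cons n m))‖ :=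
              norm_sum_le _ _
          _ ≤ ∑ _n ∈ R, Kb := Finset.sum_le_sum fun n _ => hKb _
          _ = (R.card : ℝ) * Kb := by rw [Finset.sum_const, nsmul_eq_mul]
      have h2 : ‖(∑ n ∈ R, F (g (Fin.cons n m))) / (R.card : ℂ)‖ ≤ Kb := by
        rw [norm_div]
        have hn : ‖((R.card : ℂ))‖ = (R.card : ℝ) := by simp
        rw [hn, div_le_iff₀ (by exact_mod_cast hRpos)]
        linarith [h1]
      calc ‖(∑ n ∈ R, F (g (Fin.cons n m))) / (R.card : ℂ) - I‖
          ≤ ‖(∑ n ∈ R, F (g (Fin.cons n m))) / (R.card : ℂ)‖ + ‖I‖ := norm_sub_le _ _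
        _ ≤ 2 * Kb := by linarith
    -- split the sum over good and bad tuples
    have hsplit : ∑ m ∈ Q, ‖(∑ n ∈ R, F (g (Fin.cons n m))) / (R.card : ℂ) - I‖
        ≤ (B.card : ℝ) * (2 * Kb) + (Q.card : ℝ) * ((δ / 2) * (Kb + Kl)) := by
      have := Finset.sum_filter_add_sum_filter_not Q
        (fun m : Fin s → ℤ => ¬ EquiDist μ R (fun n => g (Fin.cons n m)) (δ / 2))
        (fun m => ‖(∑ n ∈ R, F (g (Fin.cons n m))) / (R.card : ℂ) - I‖)
      rw [← this]
      refine add_le_add ?_ ?_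
      · -- bad tuples: trivial bound
        calc ∑ m ∈ B, ‖(∑ n ∈ R, F (g (Fin.cons n m))) / (R.card : ℂ) - I‖
            ≤ ∑ _m ∈ B, 2 * Kb := Finset.sum_le_sum fun m _ => hbound m
          _ = (B.card : ℝ) * (2 * Kb) := by rw [Finset.sum_const, nsmul_eq_mul]
      · -- good tuples: equidistribution bound
        calc ∑ m ∈ Q.filter (fun m => ¬¬ EquiDist μ R (fun n => g (Fin.cons n m)) (δ / 2)),
              ‖(∑ n ∈ R, F (g (Fin.cons n m))) / (R.card : ℂ) - I‖
            ≤ ∑ _m ∈ Q.filter (fun m => ¬¬ EquiDist μ R (fun n => g (Fin.cons n m)) (δ / 2)),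
              (δ / 2) * (Kb + Kl) := by
              refine Finset.sum_le_sum fun m hm => ?_
              rw [Finset.mem_filter, not_not] at hm
              exact hm.2 F Kb Kl hKb hKl
          _ ≤ (Q.card : ℝ) * ((δ / 2) * (Kb + Kl)) := by
              rw [Finset.sum_const, nsmul_eq_mul]
              have hc : ((Q.filter (fun m => ¬¬ EquiDist μ R
                  (fun n => g (Fin.cons n m)) (δ / 2))).card : ℝ) ≤ (Q.card : ℝ) := by
                exact_mod_cast Finset.card_le_card (Finset.filter_subset _ _)
              have hnn : 0 ≤ (δ / 2) * (Kb + Kl) := by positivity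
              nlinarith
    -- combine
    have hmain : δ * (Kb + Kl) * (Q.card : ℝ)
        < (B.card : ℝ) * (2 * Kb) + (Q.card : ℝ) * ((δ / 2) * (Kb + Kl)) := by
      have h1 := lt_of_lt_of_le herr havg
      have h2 : δ * (Kb + Kl)
          < ((B.card : ℝ) * (2 * Kb) + (Q.card : ℝ) * ((δ / 2) * (Kb + Kl)))
            / (Q.card : ℝ) := lt_of_lt_of_le h1 ((div_le_div_iff_of_pos_right hQR).2 hsplit)
      rw [lt_div_iff₀ hQR] at h2
      linarith
    -- derive (δ/2)(Kb+Kl) Q < 2(Kb+Kl) B and conclude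
    have hKbE : Kb ≤ Kb + Kl := by linarith
    have h3 : (δ / 2) * (Kb + Kl) * (Q.card : ℝ) < 2 * (Kb + Kl) * (B.card : ℝ) := by
      nlinarith
    rcases eq_or_lt_of_le hE0 with hE | hE
    · exfalso
      rw [← hE] at h3
      simp at h3
    · have h4 : (Kb + Kl) * ((δ / 2) * (Q.card : ℝ)) < (Kb + Kl) * (2 * (B.card : ℝ)) := by
        nlinarith
      have h5 := lt_of_mul_lt_mul_left h4 (le_of_lt hE)
      nlinarith
  · -- degenerate case: Kl < 0, so X is a subsingleton and every tuple is bad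
    push_neg at hKl0
    have hsub : ∀ x y : X, x = y := by
      intro x y
      by_contra hxy
      have hd : 0 < dist x y := dist_pos.2 hxy
      have hprod : Kl * dist x y < 0 := mul_neg_of_neg_of_pos hKl0 hd
      linarith [norm_nonneg (F x - F y), hKl x y]
    have hFc : ∀ x : X, F x = F (g 1) := fun x => by rw [hsub x (g 1)]
    have herr0 : ‖(∑ v ∈ P, F (g v)) / (P.card : ℂ) - I‖ = 0 := by
      have h1 : (∑ v ∈ P, F (g v)) = (P.card : ℂ) * F (g 1) := by
        rw [Finset.sum_congr rfl fun v _ => hFc (g v), Finset.sum_const, nsmul_eq_mul]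
      have h2 : I = F (g 1) := by
        have hc : (∫ x, F x ∂μ) = ∫ _x, F (g 1) ∂μ :=
          integral_congr_ae (Filter.Eventually.of_forall fun x => by rw [hFc x])
        rw [hIdef, hc, integral_const]
        simp
      have hPC : ((P.card : ℂ)) ≠ 0 := Nat.cast_ne_zero.2 hPpos.ne'
      rw [h1, h2, mul_comm ((P.card : ℂ)) (F (g 1)), mul_div_assoc, div_self hPC,
        mul_one, sub_self, norm_zero]
    have hE : Kb + Kl < 0 := by
      rw [herr0] at herr
      by_contra h
      push_neg at h
      have : 0 ≤ δ * (Kb + Kl) := mul_nonneg hδ.le h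
      linarith
    have hall : B = Q := by
      rw [hBdef]
      refine Finset.filter_true_of_mem fun m _ => ?_
      intro heq
      have h1 := heq F Kb Kl hKb hKl
      have h2 : δ / 2 * (Kb + Kl) < 0 :=
        mul_neg_of_pos_of_neg (by linarith) hE
      linarith [norm_nonneg ((∑ n ∈ R, F ((fun n => g (Fin.cons n m)) n))
        / (R.card : ℂ) - ∫ x, F x ∂μ), h1]
    rw [hall]
    have hQ1 : (1 : ℝ) ≤ (Q.card : ℝ) := by exact_mod_cast hQpos
    calc (δ / 4) * (Q.card : ℝ) ≤ 1 * (Q.card : ℝ) :=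
          mul_le_mul_of_nonneg_right (by linarith) (Nat.cast_nonneg _)
      _ = (Q.card : ℝ) := one_mul _
end
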